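/- Define τ(σ) = 2√(S⁻¹(σ)(1 - S⁻¹(σ))) where S(x) = -x log₂ x - (1-x) log₂(1-x) is the binary entropy and S⁻¹ maps [0,1] to [0,1/2]. Then τ is a continuous increasing bijection from [0,1] to [0,1], and for small σ, τ(σ) = Θ(√(σ/(-log σ))). -/

import Mathlib

/-- The binary entropy function `S(x) = -x log₂ x - (1-x) log₂ (1-x)`. -/
noncomputable def binEnt (x : ℝ) : ℝ := -x * Real.logb 2 x - (1 - x) * Real.logb 2 (1 - x)

open Real Set
set_option maxHeartbeats 1000000

lemma log2_pos : (0:ℝ) < Real.log 2 := Real.log_pos one_lt_two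
lemma binEnt_eq (x : ℝ) : binEnt x = Real.binEntropy x / Real.log 2 := by
  unfold binEnt Real.binEntropy Real.logb
  rw [Real.log_inv, Real.log_inv]; ring
lemma binEnt_zero : binEnt 0 = 0 := by simp [binEnt_eq]
lemma binEnt_half : binEnt (1/2) = 1 := by
  rw [binEnt_eq, show (1/2:ℝ) = 2⁻¹ by norm_num, Real.binEntropy_two_inv,
    div_self (ne_of_gt log2_pos)]
lemma binEnt_smono : StrictMonoOn binEnt (Set.Icc 0 (1/2)) := by
  intro a ha b hb hab
  rw [binEnt_eq, binEnt_eq]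
  have h : (Set.Icc (0:ℝ) (1/2)) = Set.Icc (0:ℝ) 2⁻¹ := by norm_num
  rw [h] at ha hb
  exact (div_lt_div_iff_of_pos_right log2_pos).2 (Real.binEntropy_strictMonoOn ha hb hab)
lemma binEnt_mono : MonotoneOn binEnt (Set.Icc 0 (1/2)) := binEnt_smono.monotoneOn
lemma binEnt_cont : Continuous binEnt := by
  have : binEnt = fun x => Real.binEntropy x / Real.log 2 := funext binEnt_eq
  rw [this]; exact Real.binEntropy_continuous.div_const _
lemma binEnt_mapsTo {x : ℝ} (hx : x ∈ Set.Icc (0:ℝ) (1/2)) : binEnt x ∈ Set.Icc (0:ℝ) 1 := by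
  constructor
  · have := binEnt_mono (Set.left_mem_Icc.2 (by norm_num)) hx hx.1
    rwa [binEnt_zero] at this
  · have := binEnt_mono hx (Set.right_mem_Icc.2 (by norm_num)) hx.2
    rwa [binEnt_half] at this
lemma binEnt_surj : ∀ σ ∈ Set.Icc (0:ℝ) 1, ∃ x ∈ Set.Icc (0:ℝ) (1/2), binEnt x = σ := by
  intro σ hσ
  have h := intermediate_value_Icc (by norm_num : (0:ℝ) ≤ 1/2) binEnt_cont.continuousOn
  rw [binEnt_zero, binEnt_half] at h
  obtain ⟨x, hx, hfx⟩ := h hσ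
  exact ⟨x, hx, hfx⟩

lemma asymp {x σ : ℝ} (hx0 : 0 < x) (hx1 : x < 1/65536) (hσ : binEnt x = σ) :
    (1/2) * Real.sqrt (σ / (-Real.logb 2 σ)) ≤ 2 * Real.sqrt (x * (1-x)) ∧
    2 * Real.sqrt (x * (1-x)) ≤ 2 * Real.sqrt (σ / (-Real.logb 2 σ)) := by
  obtain ⟨c, hcdef⟩ : ∃ c, c = Real.log 2 := ⟨_, rfl⟩
  have hc : 0 < c := hcdef ▸ log2_pos
  have hc2 : 0.6931 < c := by rw [hcdef]; have := Real.log_two_gt_d9; linarith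
  have hc1 : c < 0.6932 := by rw [hcdef]; have := Real.log_two_lt_d9; linarith
  obtain ⟨M, hMdef⟩ : ∃ M, M = -Real.log x := ⟨_, rfl⟩
  have h1x : 0 < 1 - x := by linarith
  have hM : 16 * c < M := by
    have hlt : Real.log x < Real.log (1/65536) := Real.log_lt_log hx0 hx1
    have h65536 : Real.log (1/65536) = -(16 * c) := by
      rw [show (1/65536:ℝ) = ((2:ℝ)^(16:ℕ))⁻¹ by norm_num, Real.log_inv, Real.log_pow, hcdef]
      norm_num
    rw [h65536] at hlt; linarith
  have hM1 : 1 < M := by nlinarith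
  have hσc : σ * c = x * M + (1-x) * Real.log (1-x)⁻¹ := by
    rw [← hσ, binEnt_eq, hcdef, div_mul_cancel₀ _ (ne_of_gt log2_pos)]
    rw [Real.binEntropy, Real.log_inv, hMdef]
    try ring
  have hT2nn : 0 ≤ (1-x) * Real.log (1-x)⁻¹ := by
    apply mul_nonneg h1x.le
    apply Real.log_nonneg
    rw [le_inv_comm₀] <;> nlinarith
  have hT2ub : (1-x) * Real.log (1-x)⁻¹ ≤ x := by
    have h := Real.log_le_sub_one_of_pos (inv_pos.2 h1x)
    have h2 : (1-x) * Real.log (1-x)⁻¹ ≤ (1-x) * ((1-x)⁻¹ - 1) :=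
      mul_le_mul_of_nonneg_left h h1x.le
    have h3 : (1-x) * ((1-x)⁻¹ - 1) = x := by field_simp; ring
    linarith
  have hlb : x * M ≤ σ * c := by linarith
  have hub : σ * c ≤ 2 * x * M := by nlinarith
  have hMpos : 0 < M := by linarith
  have hσpos : 0 < σ := by nlinarith
  obtain ⟨lc, hlcdef⟩ : ∃ lc, lc = Real.log c := ⟨_, rfl⟩
  have hlog_ub : Real.log σ + lc ≤ c - M + Real.log M := by
    have h1 : Real.log (σ * c) ≤ Real.log (2 * x * M) :=
      Real.log_le_log (by positivity) hub
    rw [Real.log_mul (ne_of_gt hσpos) (ne_of_gt hc),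
      Real.log_mul (by positivity) (ne_of_gt hMpos),
      Real.log_mul (by norm_num) (ne_of_gt hx0)] at h1
    have hlx : Real.log x = -M := by rw [hMdef]; ring
    rw [hlx, hcdef] at h1; rw [hlcdef, hcdef]; linarith
  have hlog_lb : -M + Real.log M ≤ Real.log σ + lc := by
    have h1 : Real.log (x * M) ≤ Real.log (σ * c) :=
      Real.log_le_log (by positivity) hlb
    rw [Real.log_mul (ne_of_gt hσpos) (ne_of_gt hc),
      Real.log_mul (ne_of_gt hx0) (ne_of_gt hMpos)] at h1
    have hlx : Real.log x = -M := by rw [hMdef]; ring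
    rw [hlx] at h1; rw [hlcdef]; linarith
  have hlogM : Real.log M ≤ 2 * c + M / 4 - 1 := by
    have h := Real.log_le_sub_one_of_pos (show (0:ℝ) < M/4 by linarith)
    have h4 : Real.log (M/4) = Real.log M - 2 * c := by
      rw [Real.log_div (ne_of_gt hMpos) (by norm_num),
        show (4:ℝ) = 2^(2:ℕ) by norm_num, Real.log_pow, hcdef]
      norm_num
    rw [h4] at h; linarith
  have h1c : 1/c < 1.4428 := by rw [div_lt_iff₀ hc]; nlinarith
  have hlc_lb : -lc ≤ 1/c - 1 := by
    have h := Real.log_le_sub_one_of_pos (inv_pos.2 hc)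
    rw [Real.log_inv] at h
    rw [hlcdef, one_div]; linarith
  have hD_lb : M / 2 ≤ -Real.log σ := by linarith
  have hD_ub : -Real.log σ ≤ M := by
    have hcM : Real.log c ≤ Real.log M := Real.log_le_log hc (by linarith)
    rw [← hlcdef] at hcM; linarith
  have hDeq : -Real.logb 2 σ = (-Real.log σ) / c := by
    rw [Real.logb, neg_div, hcdef]
  have hDpos : 0 < -Real.logb 2 σ := by
    rw [hDeq]; exact div_pos (by linarith) hc
  obtain ⟨D, hDdef⟩ : ∃ D, D = -Real.logb 2 σ := ⟨_, rfl⟩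
  rw [← hDdef] at hDpos hDeq ⊢
  have hDle : D ≤ M / c := by
    rw [hDeq, div_le_div_iff₀ hc hc]
    linarith [mul_le_mul_of_nonneg_right hD_ub hc.le]
  have hDge : M / (2*c) ≤ D := by
    rw [hDeq, div_le_div_iff₀ (mul_pos two_pos hc) hc]
    linarith [mul_le_mul_of_nonneg_right hD_lb (mul_pos two_pos hc).le]
  have hratio_lb : x ≤ σ / D := by
    rw [le_div_iff₀ hDpos]
    have h1 : x * D ≤ x * (M / c) := mul_le_mul_of_nonneg_left hDle hx0.le
    have h2 : x * M / c ≤ σ := by rw [div_le_iff₀ hc]; exact hlb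
    have he : x * (M / c) = x * M / c := by ring
    linarith
  have hratio_ub : σ / D ≤ 4 * x := by
    rw [div_le_iff₀ hDpos]
    have h1 : 4 * x * (M / (2*c)) ≤ 4 * x * D :=
      mul_le_mul_of_nonneg_left hDge (by linarith)
    have h2 : σ ≤ 2 * x * M / c := by rw [le_div_iff₀ hc]; exact hub
    have he : 4 * x * (M / (2*c)) = 2 * x * M / c := by field_simp; ring
    linarith
  constructor
  · have key : σ / D ≤ 16 * (x * (1-x)) := by nlinarith
    have h1 : Real.sqrt (σ / D) ≤ Real.sqrt (16 * (x * (1-x))) := Real.sqrt_le_sqrt key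
    have h2 : Real.sqrt (16 * (x * (1-x))) = 4 * Real.sqrt (x * (1-x)) := by
      rw [show (16:ℝ) * (x*(1-x)) = 4^2 * (x*(1-x)) by ring,
        Real.sqrt_mul (by positivity), Real.sqrt_sq (by norm_num)]
    rw [h2] at h1; linarith
  · have key : x * (1-x) ≤ σ / D := by nlinarith
    have h1 : Real.sqrt (x * (1-x)) ≤ Real.sqrt (σ / D) := Real.sqrt_le_sqrt key
    linarith

/-- with `S⁻¹ : [0,1] → [0,1/2]` an inverse of the binary entropy and
`τ(σ) = 2√(S⁻¹(σ)(1 - S⁻¹(σ)))`, the function `τ` is a continuous increasing bijection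
from `[0,1]` to `[0,1]`, and `τ(σ) = Θ(√(σ/(-log₂ σ)))` as `σ → 0⁺`. -/
theorem tau_properties :
    ∃ Sinv : ℝ → ℝ,
      (∀ σ ∈ Set.Icc (0 : ℝ) 1, Sinv σ ∈ Set.Icc (0 : ℝ) (1 / 2) ∧ binEnt (Sinv σ) = σ) ∧
      ∀ τ : ℝ → ℝ, (∀ σ, τ σ = 2 * Real.sqrt (Sinv σ * (1 - Sinv σ))) →
        ContinuousOn τ (Set.Icc 0 1) ∧
        StrictMonoOn τ (Set.Icc 0 1) ∧
        Set.BijOn τ (Set.Icc 0 1) (Set.Icc 0 1) ∧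
        ∃ c₁ c₂ σ₀ : ℝ, 0 < c₁ ∧ 0 < c₂ ∧ 0 < σ₀ ∧
          ∀ σ ∈ Set.Ioo (0 : ℝ) σ₀,
            c₁ * Real.sqrt (σ / (-Real.logb 2 σ)) ≤ τ σ ∧
            τ σ ≤ c₂ * Real.sqrt (σ / (-Real.logb 2 σ)) := by
  have hex : ∀ σ : ℝ, ∃ x : ℝ, σ ∈ Set.Icc (0:ℝ) 1 →
      x ∈ Set.Icc (0:ℝ) (1/2) ∧ binEnt x = σ := by
    intro σ
    by_cases h : σ ∈ Set.Icc (0:ℝ) 1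
    · obtain ⟨x, hx, hfx⟩ := binEnt_surj σ h
      exact ⟨x, fun _ => ⟨hx, hfx⟩⟩
    · exact ⟨0, fun hh => absurd hh h⟩
  choose Sinv hSinv using hex
  refine ⟨Sinv, fun σ hσ => hSinv σ hσ, ?_⟩
  intro τ hτ
  -- Sinv inverts binEnt
  have hSB : ∀ x ∈ Set.Icc (0:ℝ) (1/2), Sinv (binEnt x) = x := by
    intro x hx
    have hmem := binEnt_mapsTo hx
    obtain ⟨h1, h2⟩ := hSinv _ hmem
    exact binEnt_smono.injOn h1 hx h2
  -- strict monotonicity of Sinv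
  have hSmono : ∀ a ∈ Set.Icc (0:ℝ) 1, ∀ b ∈ Set.Icc (0:ℝ) 1, a < b → Sinv a < Sinv b := by
    intro a ha b hb hab
    obtain ⟨ha1, ha2⟩ := hSinv a ha
    obtain ⟨hb1, hb2⟩ := hSinv b hb
    by_contra h
    push_neg at h
    have := binEnt_mono hb1 ha1 h
    rw [ha2, hb2] at this; linarith
  -- strict mono of τ
  have hτmono : StrictMonoOn τ (Set.Icc 0 1) := by
    intro a ha b hb hab
    rw [hτ a, hτ b]
    obtain ⟨ha1, _⟩ := hSinv a ha
    obtain ⟨hb1, _⟩ := hSinv b hb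
    have hx := hSmono a ha b hb hab
    have h1 : Sinv a * (1 - Sinv a) < Sinv b * (1 - Sinv b) := by
      obtain ⟨ha1l, ha1r⟩ := ha1; obtain ⟨hb1l, hb1r⟩ := hb1
      nlinarith
    have h2 : Real.sqrt (Sinv a * (1 - Sinv a)) < Real.sqrt (Sinv b * (1 - Sinv b)) := by
      apply Real.sqrt_lt_sqrt _ h1
      obtain ⟨ha1l, ha1r⟩ := ha1
      nlinarith
    linarith
  -- maps to
  have hmaps : Set.MapsTo τ (Set.Icc 0 1) (Set.Icc 0 1) := by
    intro a ha
    rw [hτ a]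
    obtain ⟨⟨h1, h2⟩, _⟩ := hSinv a ha
    constructor
    · positivity
    · have hle : Sinv a * (1 - Sinv a) ≤ 1/4 := by nlinarith
      have := Real.sqrt_le_sqrt hle
      rw [show (1/4:ℝ) = (1/2)^2 by norm_num, Real.sqrt_sq (by norm_num)] at this
      linarith
  -- surjectivity
  have hsurj : Set.SurjOn τ (Set.Icc 0 1) (Set.Icc 0 1) := by
    intro y hy
    obtain ⟨hy0, hy1⟩ := hy
    set s := Real.sqrt (1 - y^2) with hsdef
    have hs0 : 0 ≤ s := Real.sqrt_nonneg _
    have hs1 : s ≤ 1 := Real.sqrt_le_one.mpr (by nlinarith)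
    have hssq : s^2 = 1 - y^2 := Real.sq_sqrt (by nlinarith)
    set x := (1 - s)/2 with hxdef
    have hx : x ∈ Set.Icc (0:ℝ) (1/2) := by
      constructor
      · rw [hxdef]; linarith
      · rw [hxdef]; linarith
    have hσmem := binEnt_mapsTo hx
    refine ⟨binEnt x, hσmem, ?_⟩
    rw [hτ, hSB x hx]
    have hxx : x * (1 - x) = y^2/4 := by rw [hxdef]; nlinarith
    rw [hxx, show y^2/4 = (y/2)^2 by ring, Real.sqrt_sq (by linarith)]
    ring
  -- continuity
  have hcont : ContinuousOn τ (Set.Icc 0 1) := by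
    rw [continuousOn_iff_continuous_restrict]
    have hFm : Monotone (fun a : Set.Icc (0:ℝ) 1 => (⟨τ a, hmaps a.2⟩ : Set.Icc (0:ℝ) 1)) := by
      intro a b hab
      rcases eq_or_lt_of_le hab with h | h
      · simp [h]
      · exact le_of_lt (hτmono a.2 b.2 h)
    have hFs : Function.Surjective
        (fun a : Set.Icc (0:ℝ) 1 => (⟨τ a, hmaps a.2⟩ : Set.Icc (0:ℝ) 1)) := by
      intro y
      obtain ⟨a, ha, hay⟩ := hsurj y.2
      exact ⟨⟨a, ha⟩, Subtype.ext hay⟩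
    have := hFm.continuous_of_surjective hFs
    exact continuous_subtype_val.comp this
  refine ⟨hcont, hτmono, ⟨hmaps, hτmono.injOn, hsurj⟩, ?_⟩
  -- asymptotics
  refine ⟨1/2, 2, binEnt (1/65536), by norm_num, by norm_num, ?_, ?_⟩
  · rw [binEnt_eq]
    apply div_pos _ log2_pos
    apply Real.binEntropy_pos <;> norm_num
  · intro σ hσ
    obtain ⟨hσ0, hσ1⟩ := hσ
    have h65 : (1/65536 : ℝ) ∈ Set.Icc (0:ℝ) (1/2) := by norm_num
    have hσle : σ ∈ Set.Icc (0:ℝ) 1 := by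
      have := (binEnt_mapsTo h65).2
      exact ⟨hσ0.le, by linarith⟩
    obtain ⟨hx1, hx2⟩ := hSinv σ hσle
    have hxpos : 0 < Sinv σ := by
      rcases lt_or_eq_of_le hx1.1 with h | h
      · exact h
      · exfalso; rw [← h, binEnt_zero] at hx2; linarith
    have hxlt : Sinv σ < 1/65536 := by
      by_contra h
      push_neg at h
      have := binEnt_mono h65 hx1 h
      rw [hx2] at this; linarith
    have := asymp hxpos hxlt hx2
    rw [hτ σ]
    exact this
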